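/- arXiv:0806.4785 — 10 statements merged into one kernel-verified Lean document; each statement's English description precedes it below -/
import Mathlib

section
/- For any suits X⁺ and Y⁺ over A and any J-saturated disjoint cover operation ∪_J, the set {V : ∃ V₁ ∈ X⁺, V₂ ∈ Y⁺, V = V₁ ∪ V₂, V₁ ∩ V₂ = ∅, and both V₁ and V₂ are closed under the equivalence ≈_J restricted to V} is again a suit. -/
open Set

/-- A pair of sets of teams (truth coordinate, falsity coordinate). -/
abbrev DPair (α : Type*) := Set (Set α) × Set (Set α)

/-- A suit: a nonempty, downward-closed collection of teams. -/
def Suit {α : Type*} (X : Set (Set α)) : Prop :=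
  X.Nonempty ∧ ∀ V ∈ X, ∀ V' ⊆ V, V' ∈ X

/-- A double suit: a pair of suits intersecting exactly in {∅}. -/
def DoubleSuit {α : Type*} (X : DPair α) : Prop :=
  Suit X.1 ∧ Suit X.2 ∧ X.1 ∩ X.2 = {∅}

def dsZero {α : Type*} : DPair α := ({∅}, Set.univ)
def dsOne {α : Type*} : DPair α := (Set.univ, {∅})
def dsOmega {α : Type*} : DPair α := ({∅}, {∅})

def dsNeg {α : Type*} (X : DPair α) : DPair α := (X.2, X.1)

/-- `X +_N Y` (J = full index set). -/
def plusN {α : Type*} (X Y : DPair α) : DPair α := (X.1 ∪ Y.1, X.2 ∩ Y.2)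

/-- `X ·_N Y` (J = full index set). -/
def dotN {α : Type*} (X Y : DPair α) : DPair α := (X.1 ∩ Y.1, X.2 ∪ Y.2)

/-- `X +_∅ Y`: truth coordinate given by disjoint unions. -/
def plusE {α : Type*} (X Y : DPair α) : DPair α :=
  ({V | ∃ V₁ ∈ X.1, ∃ V₂ ∈ Y.1, V = V₁ ∪ V₂ ∧ V₁ ∩ V₂ = ∅}, X.2 ∩ Y.2)

/-- `X ·_∅ Y`. -/
def dotE {α : Type*} (X Y : DPair α) : DPair α :=
  (X.1 ∩ Y.1, {W | ∃ W₁ ∈ X.2, ∃ W₂ ∈ Y.2, W = W₁ ∪ W₂ ∧ W₁ ∩ W₂ = ∅})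

/-- The partial order `X ≤ Y` iff `X⁺ ⊆ Y⁺` and `Y⁻ ⊆ X⁻`. -/
def leD {α : Type*} (X Y : DPair α) : Prop := X.1 ⊆ Y.1 ∧ Y.2 ⊆ X.2

/-- `a ≈_J b`: valuations agreeing outside `J`. -/
def approxJ {N A : Type*} (J : Set N) (a b : N → A) : Prop := ∀ i ∉ J, a i = b i

/-- `V = V₁ ∪_J V₂`: a J-saturated disjoint cover of `V`. -/
def unionJ {N A : Type*} (J : Set N) (V V₁ V₂ : Set (N → A)) : Prop :=
  V = V₁ ∪ V₂ ∧ V₁ ∩ V₂ = ∅ ∧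
  ∀ a ∈ V, ∀ b ∈ V, approxJ J a b → (a ∈ V₁ → b ∈ V₁) ∧ (a ∈ V₂ → b ∈ V₂)

/-- `X +_J Y`. -/
def plusJ {N A : Type*} (J : Set N) (X Y : DPair (N → A)) : DPair (N → A) :=
  ({V | ∃ V₁ ∈ X.1, ∃ V₂ ∈ Y.1, unionJ J V V₁ V₂}, X.2 ∩ Y.2)

/-- `X ·_J Y`. -/
def dotJ {N A : Type*} (J : Set N) (X Y : DPair (N → A)) : DPair (N → A) :=
  (X.1 ∩ Y.1, {W | ∃ W₁ ∈ X.2, ∃ W₂ ∈ Y.2, unionJ J W W₁ W₂})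

/-- `nsum X n` is the (n+1)-fold sum `X +_∅ ⋯ +_∅ X`. -/
def nsum {α : Type*} (X : DPair α) : ℕ → DPair α
  | 0 => X
  | n + 1 => plusE X (nsum X n)

/-- The order of `X`: the least positive `n` whose `n`-fold `+_∅` sum of `X` is 1
(`⊤` if there is none). -/
noncomputable def ordOf {α : Type*} (X : DPair α) : ℕ∞ :=
  sInf {m : ℕ∞ | ∃ n : ℕ, m = (n : ℕ∞) + 1 ∧ nsum X n = dsOne}

theorem Suit.empty_mem {α : Type*} {X : Set (Set α)} (hX : Suit X) : ∅ ∈ X :=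
  let ⟨V, hV⟩ := hX.1
  hX.2 V hV ∅ (empty_subset V)

theorem Suit.inter_mem {α : Type*} {X : Set (Set α)} (hX : Suit X) {V : Set α} (hV : V ∈ X)
    (W : Set α) : V ∩ W ∈ X :=
  hX.2 V hV _ inter_subset_left

theorem unionJ_empty {N A : Type*} (J : Set N) : unionJ J (∅ : Set (N → A)) ∅ ∅ :=
  ⟨(union_empty ∅).symm, inter_empty ∅, fun _ ha => ha.elim⟩

theorem unionJ.restrict {N A : Type*} {J : Set N} {V V₁ V₂ : Set (N → A)}
    (h : unionJ J V V₁ V₂) {V' : Set (N → A)} (hV' : V' ⊆ V) :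
    unionJ J V' (V₁ ∩ V') (V₂ ∩ V') := by
  obtain ⟨hcover, hdisj, hsat⟩ := h
  refine ⟨?_, ?_, fun a ha b hb hab => ?_⟩
  · rw [← union_inter_distrib_right, ← hcover, inter_eq_right.mpr hV']
  · exact subset_empty_iff.mp (hdisj ▸ inter_subset_inter inter_subset_left inter_subset_left)
  · have hsat' := hsat a (hV' ha) b (hV' hb) hab
    exact ⟨fun h₁ => ⟨hsat'.1 h₁.1, hb⟩, fun h₂ => ⟨hsat'.2 h₂.1, hb⟩⟩

theorem stmt1 {N A : Type*} (J : Set N) (X Y : Set (Set (N → A)))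
    (hX : Suit X) (hY : Suit Y) :
    Suit {V | ∃ V₁ ∈ X, ∃ V₂ ∈ Y, unionJ J V V₁ V₂} := by
  refine ⟨⟨∅, ∅, hX.empty_mem, ∅, hY.empty_mem, unionJ_empty J⟩, ?_⟩
  rintro V ⟨V₁, hV₁, V₂, hV₂, hV⟩ V' hV'
  exact ⟨V₁ ∩ V', hX.inter_mem hV₁ V', V₂ ∩ V', hY.inter_mem hV₂ V', hV.restrict hV'⟩
end

section
/- If X and Y are double suits, X ≤ Y, and Y is flat (Y⁺ = P(V) for some team V), then X +_J Y = Y for every J ⊆ N. -/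
open Set

theorem unionJ_empty_left {N A : Type*} (J : Set N) (V : Set (N → A)) : unionJ J V ∅ V :=
  ⟨(empty_union V).symm, empty_inter V, fun _ _ _ hb _ => ⟨False.elim, fun _ => hb⟩⟩

theorem subset_plusJ_fst {N A : Type*} (J : Set N) {X Y : DPair (N → A)} (hX : ∅ ∈ X.1) :
    Y.1 ⊆ (plusJ J X Y).1 :=
  fun U hU => ⟨∅, hX, U, hU, unionJ_empty_left J U⟩

theorem plusJ_fst_subset_powerset {N A : Type*} (J : Set N) {X Y : DPair (N → A)}
    {V : Set (N → A)} (hX : X.1 ⊆ 𝒫 V) (hY : Y.1 ⊆ 𝒫 V) : (plusJ J X Y).1 ⊆ 𝒫 V := by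
  rintro U ⟨V₁, hV₁, V₂, hV₂, rfl, -, -⟩
  exact union_subset (hX hV₁) (hY hV₂)

theorem stmt3_general {N A : Type*} (X Y : DPair (N → A))
    (hX : DoubleSuit X)
    (hXY : leD X Y) (hflat : ∃ V : Set (N → A), Y.1 = 𝒫 V) :
    ∀ J : Set N, plusJ J X Y = Y := by
  intro J
  obtain ⟨V, hV⟩ := hflat
  have hpos : (plusJ J X Y).1 = Y.1 := by
    refine subset_antisymm ?_ (subset_plusJ_fst J hX.1.empty_mem)
    rw [hV]
    exact plusJ_fst_subset_powerset J (hV ▸ hXY.1) hV.le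
  exact Prod.ext hpos (inter_eq_right.mpr hXY.2)

theorem stmt3 {N A : Type*} (X Y : DPair (N → A))
    (hX : DoubleSuit X) (hY : DoubleSuit Y)
    (hXY : leD X Y) (hflat : ∃ V : Set (N → A), Y.1 = 𝒫 V) :
    ∀ J : Set N, plusJ J X Y = Y :=
  stmt3_general X Y hX hXY hflat
end

section
/- If X and Y are double suits then X +_N Y = (X⁺ ∪ Y⁺, X⁻ ∩ Y⁻) and X ·_N Y = (X⁺ ∩ Y⁺, X⁻ ∪ Y⁻); moreover X +_N Y and X ·_N Y are again double suits. -/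
open Set

/-! Since `≈_N` relates any two valuations, a saturated split `V = V₁ ∪_N V₂` must put all of `V`
on one side. As every suit contains `∅`, the split `V = V ∪_N ∅` is always available, so `+_N`
and `·_N` reduce to plain unions and intersections of the coordinates. -/

namespace Suit

variable {α : Type*} {S T : Set (Set α)}

lemma empty_mem_s5 (hS : Suit S) : (∅ : Set α) ∈ S :=
  let ⟨V, hV⟩ := hS.1
  hS.2 V hV ∅ (empty_subset V)

lemma union (hS : Suit S) (hT : Suit T) : Suit (S ∪ T) :=
  ⟨hS.1.mono subset_union_left,
    fun V hV V' hV' => hV.imp (fun h => hS.2 V h V' hV') (fun h => hT.2 V h V' hV')⟩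

lemma inter (hS : Suit S) (hT : Suit T) : Suit (S ∩ T) :=
  ⟨⟨∅, hS.empty_mem_s5, hT.empty_mem_s5⟩, fun V hV V' hV' => ⟨hS.2 V hV.1 V' hV', hT.2 V hV.2 V' hV'⟩⟩

end Suit

namespace DoubleSuit

variable {α : Type*} {X Y : DPair α}

lemma dsNeg (hX : DoubleSuit X) : DoubleSuit (dsNeg X) :=
  ⟨hX.2.1, hX.1, by rw [inter_comm]; exact hX.2.2⟩

lemma plusN (hX : DoubleSuit X) (hY : DoubleSuit Y) : DoubleSuit (plusN X Y) := by
  obtain ⟨hX₁, hX₂, hX₁₂⟩ := hX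
  obtain ⟨hY₁, hY₂, hY₁₂⟩ := hY
  refine ⟨hX₁.union hY₁, hX₂.inter hY₂, Subset.antisymm ?_ ?_⟩
  · rintro V ⟨hV₁ | hV₁, hVX₂, hVY₂⟩
    · exact hX₁₂ ▸ ⟨hV₁, hVX₂⟩
    · exact hY₁₂ ▸ ⟨hV₁, hVY₂⟩
  · rintro V rfl
    exact ⟨Or.inl hX₁.empty_mem_s5, hX₂.empty_mem_s5, hY₂.empty_mem_s5⟩

lemma dotN (hX : DoubleSuit X) (hY : DoubleSuit Y) : DoubleSuit (dotN X Y) :=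
  (hX.dsNeg.plusN hY.dsNeg).dsNeg

end DoubleSuit

section UnionUniv

variable {N A : Type*}

lemma unionJ_univ_iff {V V₁ V₂ : Set (N → A)} :
    unionJ (univ : Set N) V V₁ V₂ ↔ (V₁ = V ∧ V₂ = ∅) ∨ (V₁ = ∅ ∧ V₂ = V) := by
  constructor
  · rintro ⟨rfl, hdisj, hsat⟩
    rcases V₁.eq_empty_or_nonempty with rfl | ⟨a, ha⟩
    · exact Or.inr ⟨rfl, (empty_union V₂).symm⟩
    have hV₂ : V₂ = ∅ := eq_empty_of_forall_notMem fun b hb =>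
      have hb₁ : b ∈ V₁ :=
        (hsat a (Or.inl ha) b (Or.inr hb) fun i hi => absurd (mem_univ i) hi).1 ha
      hdisj.subset ⟨hb₁, hb⟩
    exact Or.inl ⟨by rw [hV₂, union_empty], hV₂⟩
  · rintro (⟨rfl, rfl⟩ | ⟨rfl, rfl⟩) <;>
      exact ⟨by simp, by simp, fun a ha b hb _ => by simp_all⟩

lemma setOf_unionJ_univ_eq_union {S T : Set (Set (N → A))} (hS : ∅ ∈ S) (hT : ∅ ∈ T) :
    {V | ∃ V₁ ∈ S, ∃ V₂ ∈ T, unionJ (univ : Set N) V V₁ V₂} = S ∪ T := by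
  ext V
  constructor
  · rintro ⟨V₁, h₁, V₂, h₂, hV⟩
    rcases unionJ_univ_iff.mp hV with ⟨rfl, -⟩ | ⟨-, rfl⟩
    exacts [Or.inl h₁, Or.inr h₂]
  · rintro (h | h)
    · exact ⟨V, h, ∅, hT, unionJ_univ_iff.mpr (Or.inl ⟨rfl, rfl⟩)⟩
    · exact ⟨∅, hS, V, h, unionJ_univ_iff.mpr (Or.inr ⟨rfl, rfl⟩)⟩

lemma plusJ_univ {X Y : DPair (N → A)} (hX : ∅ ∈ X.1) (hY : ∅ ∈ Y.1) :
    plusJ (univ : Set N) X Y = plusN X Y := by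
  rw [plusJ, setOf_unionJ_univ_eq_union hX hY, plusN]

lemma dotJ_univ {X Y : DPair (N → A)} (hX : ∅ ∈ X.2) (hY : ∅ ∈ Y.2) :
    dotJ (univ : Set N) X Y = dotN X Y := by
  rw [dotJ, setOf_unionJ_univ_eq_union hX hY, dotN]

end UnionUniv

theorem stmt5 {N A : Type*} (X Y : DPair (N → A))
    (hX : DoubleSuit X) (hY : DoubleSuit Y) :
    plusJ (Set.univ : Set N) X Y = plusN X Y ∧
    dotJ (Set.univ : Set N) X Y = dotN X Y ∧
    DoubleSuit (plusN X Y) ∧ DoubleSuit (dotN X Y) :=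
  ⟨plusJ_univ hX.1.empty_mem_s5 hY.1.empty_mem_s5, dotJ_univ hX.2.1.empty_mem_s5 hY.2.1.empty_mem_s5,
    hX.plusN hY, hX.dotN hY⟩
end

section
/- The number of double suits over a 1-element set is 3, over a 2-element set is 11, and over a 3-element set is 55. -/
open Set

/-!
Over a finite type `α`, a family of subsets of `α` is the same as a finset of finsets of `α`, and
this correspondence carries suits and the condition `X⁺ ∩ X⁻ = {∅}` to their finset versions. The
double suits over `Fin n` are thereby in bijection with an explicit finset of pairs of finset
families, whose size is computed by enumeration.
-/

section FinsetFamilies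

variable {α : Type*} [Fintype α]

noncomputable def finsetFamilyEquiv : Set (Set α) ≃ Finset (Finset α) :=
  (Equiv.Set.congr Fintype.finsetEquivSet.symm).trans Fintype.finsetEquivSet.symm

theorem mem_finsetFamilyEquiv {X : Set (Set α)} {s : Finset α} :
    s ∈ finsetFamilyEquiv X ↔ (s : Set α) ∈ X := by
  classical
  rw [finsetFamilyEquiv, Equiv.trans_apply, Equiv.Set.congr_apply, Equiv.image_eq_preimage_symm,
    Fintype.finsetEquivSet_symm_apply, Set.mem_toFinset, Set.mem_preimage, Equiv.symm_symm,
    Fintype.finsetEquivSet_apply]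

def IsFinsetSuit (F : Finset (Finset α)) : Prop :=
  F.Nonempty ∧ ∀ V ∈ F, ∀ V' ⊆ V, V' ∈ F

instance [DecidableEq α] : DecidablePred (IsFinsetSuit (α := α)) :=
  fun _ => inferInstanceAs (Decidable (_ ∧ _))

theorem suit_iff_isFinsetSuit (X : Set (Set α)) :
    Suit X ↔ IsFinsetSuit (finsetFamilyEquiv X) := by
  simp only [Suit, IsFinsetSuit, Set.Nonempty, Finset.Nonempty, mem_finsetFamilyEquiv,
    ← Fintype.finsetEquivSet.exists_congr_right, ← Fintype.finsetEquivSet.forall_congr_right,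
    Fintype.finsetEquivSet_apply, Finset.coe_subset]

variable [DecidableEq α]

theorem inter_eq_singleton_empty_iff_finsetFamilyEquiv (X Y : Set (Set α)) :
    X ∩ Y = {∅} ↔ finsetFamilyEquiv X ∩ finsetFamilyEquiv Y = {∅} := by
  rw [Set.ext_iff, Finset.ext_iff]
  simp only [mem_finsetFamilyEquiv, Set.mem_inter_iff, Finset.mem_inter,
    Set.mem_singleton_iff, Finset.mem_singleton, ← Fintype.finsetEquivSet.forall_congr_right,
    Fintype.finsetEquivSet_apply, Finset.coe_eq_empty]

-- Filtering the suits before forming pairs keeps the enumeration small (19 suits over `Fin 3`).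
variable (α) in
def finsetDoubleSuits : Finset (Finset (Finset α) × Finset (Finset α)) :=
  {p ∈ Finset.univ.filter IsFinsetSuit ×ˢ Finset.univ.filter IsFinsetSuit | p.1 ∩ p.2 = {∅}}

theorem doubleSuit_iff_mem_finsetDoubleSuits (X : DPair α) :
    DoubleSuit X ↔ finsetFamilyEquiv.prodCongr finsetFamilyEquiv X ∈ finsetDoubleSuits α := by
  simp only [DoubleSuit, finsetDoubleSuits, suit_iff_isFinsetSuit,
    inter_eq_singleton_empty_iff_finsetFamilyEquiv, Finset.mem_filter, Finset.mem_product,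
    Finset.mem_univ, true_and, Equiv.prodCongr_apply, Prod.map_fst, Prod.map_snd, and_assoc]

theorem card_doubleSuit :
    Nat.card {X : DPair α // DoubleSuit X} = (finsetDoubleSuits α).card := by
  rw [Nat.card_congr ((finsetFamilyEquiv.prodCongr finsetFamilyEquiv).subtypeEquiv
    doubleSuit_iff_mem_finsetDoubleSuits), Nat.card_eq_fintype_card, Fintype.card_coe]

end FinsetFamilies

theorem stmt8 :
    Nat.card {X : DPair (Fin 1) // DoubleSuit X} = 3 ∧
    Nat.card {X : DPair (Fin 2) // DoubleSuit X} = 11 ∧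
    Nat.card {X : DPair (Fin 3) // DoubleSuit X} = 55 := by
  simp only [card_doubleSuit]
  decide
end

section
/- Let A = {0,1} with N = 1, and consider the double suits A₀ = (P({0}) ∪ P({1}), {∅}) and B₀ = (P({0}), {∅}) over A (here teams are subsets of A). Then A₀ +_∅ A₀ = 1 while B₀ +_∅ B₀ = B₀; in particular A₀ has order 2 under +_∅ while B₀ has infinite order. -/
open Set

/-- `A₀ = (P({0}) ∪ P({1}), {∅})` over `A = {0,1}`. -/
def A₀ : DPair (Fin 2) := (𝒫 ({0} : Set (Fin 2)) ∪ 𝒫 ({1} : Set (Fin 2)), {∅})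

/-- `B₀ = (P({0}), {∅})` over `A = {0,1}`. -/
def B₀ : DPair (Fin 2) := (𝒫 ({0} : Set (Fin 2)), {∅})

/-! Under `+_∅`, truth coordinates `𝒫 S` and `𝒫 T` add up to `𝒫 (S ∪ T)`: a team `V ⊆ S ∪ T`
splits disjointly as `(V ∩ S) ∪ (V \ S)`. Hence `A₀ + A₀ ⊇ 𝒫 {0} + 𝒫 {1}` contains every team,
while `B₀` is idempotent, so all its multiples equal `B₀ ≠ 1`. -/

section PlusE

variable {α : Type*}

theorem plusE_fst_mono {X X' Y Y' : DPair α} (hX : X.1 ⊆ X'.1) (hY : Y.1 ⊆ Y'.1) :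
    (plusE X Y).1 ⊆ (plusE X' Y').1 := by
  rintro V ⟨V₁, h₁, V₂, h₂, hV, hdisj⟩
  exact ⟨V₁, hX h₁, V₂, hY h₂, hV, hdisj⟩

theorem plusE_powerset (S T : Set α) (W W' : Set (Set α)) :
    plusE (𝒫 S, W) (𝒫 T, W') = (𝒫 (S ∪ T), W ∩ W') := by
  refine Prod.ext (Set.ext fun V => ⟨?_, fun hV => ?_⟩) rfl
  · rintro ⟨V₁, h₁, V₂, h₂, rfl, -⟩
    exact union_subset_union h₁ h₂
  · refine ⟨V ∩ S, inter_subset_right, V \ S, fun x hx => ?_, (inter_union_sdiff V S).symm,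
      (disjoint_sdiff_self_right.mono_left inter_subset_right).inter_eq⟩
    exact (hV hx.1).resolve_left hx.2

theorem nsum_eq_self_of_plusE_self {X : DPair α} (h : plusE X X = X) (n : ℕ) : nsum X n = X := by
  induction n with
  | zero => rfl
  | succ n ih => rw [nsum, ih, h]

theorem ne_dsOne_of_notMem {X : DPair α} {V : Set α} (hV : V ∉ X.1) : X ≠ dsOne := by
  rintro rfl
  exact hV (mem_univ V)

end PlusE

section Order

variable {α : Type*} {X : DPair α}

theorem ordOf_eq_natCast_add_one {n : ℕ} (hn : nsum X n = dsOne)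
    (hmin : ∀ k < n, nsum X k ≠ dsOne) : ordOf X = n + 1 := by
  refine IsLeast.csInf_eq ⟨⟨n, rfl, hn⟩, ?_⟩
  rintro _ ⟨k, rfl, hk⟩
  have : n ≤ k := not_lt.mp fun hlt => hmin k hlt hk
  gcongr

theorem ordOf_eq_top (h : ∀ n, nsum X n ≠ dsOne) : ordOf X = ⊤ := by
  refine sInf_eq_top.mpr ?_
  rintro _ ⟨n, -, hn⟩
  exact absurd hn (h n)

end Order

theorem plusE_A₀_A₀ : plusE A₀ A₀ = dsOne := by
  refine Prod.ext (eq_univ_of_univ_subset ?_) (inter_self _)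
  have hsplit := plusE_powerset ({0} : Set (Fin 2)) {1} {∅} {∅}
  have hcover : ({0} ∪ {1} : Set (Fin 2)) = univ := by
    ext x
    fin_cases x <;> simp
  calc univ = (plusE (𝒫 {0}, {∅}) (𝒫 {1}, {∅}) : DPair (Fin 2)).1 := by
          rw [hsplit, hcover, powerset_univ]
    _ ⊆ (plusE A₀ A₀).1 := plusE_fst_mono subset_union_left subset_union_right

theorem plusE_B₀_B₀ : plusE B₀ B₀ = B₀ := by
  rw [B₀, plusE_powerset, union_self, inter_self]

theorem A₀_ne_dsOne : A₀ ≠ dsOne :=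
  ne_dsOne_of_notMem (V := univ) (by simp [A₀])

theorem B₀_ne_dsOne : B₀ ≠ dsOne :=
  ne_dsOne_of_notMem (V := {1}) (by simp [B₀])

theorem stmt10 :
    plusE A₀ A₀ = dsOne ∧ plusE B₀ B₀ = B₀ ∧
    ordOf A₀ = 2 ∧ ordOf B₀ = ⊤ := by
  refine ⟨plusE_A₀_A₀, plusE_B₀_B₀, ?_, ?_⟩
  · have h := ordOf_eq_natCast_add_one (X := A₀) (n := 1) plusE_A₀_A₀ fun k hk => by
      rw [Nat.lt_one_iff.mp hk]
      exact A₀_ne_dsOne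
    rw [h]
    rfl
  · exact ordOf_eq_top fun n => by
      rw [nsum_eq_self_of_plusE_self plusE_B₀_B₀]
      exact B₀_ne_dsOne
end

section
/- Let ≅ be a congruence on a double-suited IFG_N-algebra containing Ω (compatible with ¬, +_N, and full cylindrification C). If X < Ω < Y in the order X ≤ Y iff (X⁺ ⊆ Y⁺ and Y⁻ ⊆ X⁻), and X ≅ Y, then ≅ is the total congruence. -/
open Set

open Classical in
/-- Full cylindrification of all variables: sends `X` to 0 if `X = 0`, to `Ω` if
`0 < X ≤ Ω`, and to 1 if `X ≰ Ω`. -/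
noncomputable def cylFull {α : Type*} (X : DPair α) : DPair α :=
  if X = dsZero then dsZero else if leD X dsOmega then dsOmega else dsOne

/-!
Cylindrifying `X < Ω < Y` sends `Y` to `1` and `X` to `0` or `Ω`; in the latter case negation
(which swaps `0` and `1` and fixes `Ω`) gives `0 ≅ Ω ≅ 1` as well. Once `0 ≅ 1`, every double
suit `Z` satisfies `Z = Z +_N 0 ≅ Z +_N 1 = 1`, since both coordinates of `Z` contain `∅`.
-/

section

variable {α : Type*}

theorem leD_antisymm {X Y : DPair α} (hXY : leD X Y) (hYX : leD Y X) : X = Y :=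
  Prod.ext (hXY.1.antisymm hYX.1) (hYX.2.antisymm hXY.2)

theorem DoubleSuit.empty_mem_fst {X : DPair α} (hX : DoubleSuit X) : (∅ : Set α) ∈ X.1 :=
  (hX.2.2.symm ▸ rfl : (∅ : Set α) ∈ X.1 ∩ X.2).1

theorem DoubleSuit.empty_mem_snd {X : DPair α} (hX : DoubleSuit X) : (∅ : Set α) ∈ X.2 :=
  (hX.2.2.symm ▸ rfl : (∅ : Set α) ∈ X.1 ∩ X.2).2

theorem plusN_dsZero {X : DPair α} (hX : (∅ : Set α) ∈ X.1) : plusN X dsZero = X := by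
  simp [plusN, dsZero, hX]

theorem plusN_dsOne {X : DPair α} (hX : (∅ : Set α) ∈ X.2) : plusN X dsOne = dsOne := by
  simp [plusN, dsOne, hX]

theorem dsNeg_dsOne : dsNeg (dsOne : DPair α) = dsZero := rfl

theorem dsNeg_dsOmega : dsNeg (dsOmega : DPair α) = dsOmega := rfl

theorem cylFull_eq_dsZero_or_dsOmega {X : DPair α} (hX : leD X dsOmega) :
    cylFull X = dsZero ∨ cylFull X = dsOmega := by
  unfold cylFull
  split_ifs <;> simp_all

theorem cylFull_of_not_leD_dsOmega {X : DPair α} (hX : ¬ leD X dsOmega) :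
    cylFull X = dsOne := by
  have hX0 : X ≠ dsZero := by
    rintro rfl
    exact hX ⟨subset_rfl, subset_univ _⟩
  simp [cylFull, hX0, hX]

theorem rel_of_rel_dsZero_dsOne {S : Set (DPair α)} (hS : ∀ X ∈ S, DoubleSuit X)
    (hZero : dsZero ∈ S) (hOne : dsOne ∈ S) {R : DPair α → DPair α → Prop} (hEq : Equivalence R)
    (hRplus : ∀ X ∈ S, ∀ Y ∈ S, ∀ X' ∈ S, ∀ Y' ∈ S,
      R X X' → R Y Y' → R (plusN X Y) (plusN X' Y'))
    (h01 : R dsZero dsOne) : ∀ Z ∈ S, ∀ W ∈ S, R Z W := by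
  have hR1 : ∀ Z ∈ S, R Z dsOne := fun Z hZ => by
    simpa only [plusN_dsZero (hS Z hZ).empty_mem_fst, plusN_dsOne (hS Z hZ).empty_mem_snd] using
      hRplus Z hZ dsZero hZero Z hZ dsOne hOne (hEq.refl Z) h01
  exact fun Z hZ W hW => hEq.trans (hR1 Z hZ) (hEq.symm (hR1 W hW))

end

theorem stmt13_general {N A : Type*} (S : Set (DPair (N → A)))
    (hS : ∀ X ∈ S, DoubleSuit X) (hOm : dsOmega ∈ S)
    (hSneg : ∀ X ∈ S, dsNeg X ∈ S)
    (hScyl : ∀ X ∈ S, cylFull X ∈ S)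
    (R : DPair (N → A) → DPair (N → A) → Prop) (hEq : Equivalence R)
    (hRneg : ∀ X ∈ S, ∀ Y ∈ S, R X Y → R (dsNeg X) (dsNeg Y))
    (hRplus : ∀ X ∈ S, ∀ Y ∈ S, ∀ X' ∈ S, ∀ Y' ∈ S,
      R X X' → R Y Y' → R (plusN X Y) (plusN X' Y'))
    (hRcyl : ∀ X ∈ S, ∀ Y ∈ S, R X Y → R (cylFull X) (cylFull Y))
    (X Y : DPair (N → A)) (hXS : X ∈ S) (hYS : Y ∈ S)
    (hXlt : leD X dsOmega ∧ X ≠ dsOmega) (hYgt : leD dsOmega Y ∧ Y ≠ dsOmega)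
    (hRXY : R X Y) :
    ∀ Z ∈ S, ∀ W ∈ S, R Z W := by
  have hcY : cylFull Y = dsOne :=
    cylFull_of_not_leD_dsOmega fun h => hYgt.2 (leD_antisymm h hYgt.1)
  have hOne : dsOne ∈ S := hcY ▸ hScyl Y hYS
  have hZero : dsZero ∈ S := dsNeg_dsOne (α := N → A) ▸ hSneg dsOne hOne
  have hcyl := hRcyl X hXS Y hYS hRXY
  rw [hcY] at hcyl
  have h01 : R dsZero dsOne := by
    rcases cylFull_eq_dsZero_or_dsOmega hXlt.1 with hcX | hcX <;> rw [hcX] at hcyl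
    · exact hcyl
    · have hΩ0 := hRneg dsOmega hOm dsOne hOne hcyl
      rw [dsNeg_dsOmega, dsNeg_dsOne] at hΩ0
      exact hEq.trans (hEq.symm hΩ0) hcyl
  exact rel_of_rel_dsZero_dsOne hS hZero hOne hEq hRplus h01

theorem stmt13 {N A : Type*} (S : Set (DPair (N → A)))
    (hS : ∀ X ∈ S, DoubleSuit X) (hOm : dsOmega ∈ S)
    (hSneg : ∀ X ∈ S, dsNeg X ∈ S)
    (hSplus : ∀ X ∈ S, ∀ Y ∈ S, plusN X Y ∈ S)
    (hScyl : ∀ X ∈ S, cylFull X ∈ S)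
    (R : DPair (N → A) → DPair (N → A) → Prop) (hEq : Equivalence R)
    (hRneg : ∀ X ∈ S, ∀ Y ∈ S, R X Y → R (dsNeg X) (dsNeg Y))
    (hRplus : ∀ X ∈ S, ∀ Y ∈ S, ∀ X' ∈ S, ∀ Y' ∈ S,
      R X X' → R Y Y' → R (plusN X Y) (plusN X' Y'))
    (hRcyl : ∀ X ∈ S, ∀ Y ∈ S, R X Y → R (cylFull X) (cylFull Y))
    (X Y : DPair (N → A)) (hXS : X ∈ S) (hYS : Y ∈ S)
    (hXlt : leD X dsOmega ∧ X ≠ dsOmega) (hYgt : leD dsOmega Y ∧ Y ≠ dsOmega)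
    (hRXY : R X Y) :
    ∀ Z ∈ S, ∀ W ∈ S, R Z W :=
  stmt13_general S hS hOm hSneg hScyl R hEq hRneg hRplus hRcyl X Y hXS hYS hXlt hYgt hRXY
end

section
/- Let ≅ be a congruence on a double-suited IFG_N-algebra containing Ω that is not the trivial (identity) congruence. Then there exist elements X, Y of the algebra with X ≅ Y and Ω ≤ X < Y. -/
open Set

theorem plusN_self {α : Type*} (X : DPair α) : plusN X X = X := by
  simp [plusN]

theorem leD_plusN_left {α : Type*} (X Y : DPair α) : leD X (plusN X Y) :=
  ⟨subset_union_left, inter_subset_left⟩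

theorem leD_plusN_right {α : Type*} (X Y : DPair α) : leD Y (plusN X Y) :=
  ⟨subset_union_right, inter_subset_right⟩

theorem leD_plusN_plusN_left {α : Type*} (Z : DPair α) {X Y : DPair α} (h : leD X Y) :
    leD (plusN Z X) (plusN Z Y) :=
  ⟨union_subset_union_right _ h.1, inter_subset_inter_right _ h.2⟩

theorem leD_dsNeg {α : Type*} {X Y : DPair α} (h : leD X Y) : leD (dsNeg Y) (dsNeg X) :=
  ⟨h.2, h.1⟩

theorem fst_plusN_dsOmega {α : Type*} {X : DPair α} (h : ∅ ∈ X.1) :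
    (plusN dsOmega X).1 = X.1 :=
  union_eq_self_of_subset_left (singleton_subset_iff.mpr h)

theorem exists_rel_leD_ne {α : Type*} {S : Set (DPair α)} {R : DPair α → DPair α → Prop}
    (hSplus : ∀ X ∈ S, ∀ Y ∈ S, plusN X Y ∈ S) (hEq : Equivalence R)
    (hRplus : ∀ X ∈ S, ∀ Y ∈ S, ∀ X' ∈ S, ∀ Y' ∈ S,
      R X X' → R Y Y' → R (plusN X Y) (plusN X' Y'))
    {X Y : DPair α} (hX : X ∈ S) (hY : Y ∈ S) (hR : R X Y) (hne : X ≠ Y) :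
    ∃ P ∈ S, ∃ Q ∈ S, R P Q ∧ leD P Q ∧ P ≠ Q := by
  have hXS : R X (plusN X Y) := by
    simpa only [plusN_self] using hRplus X hX X hX X hX Y hY (hEq.refl X) hR
  have hYS : R Y (plusN X Y) := hEq.symm <| by
    simpa only [plusN_self] using hRplus X hX Y hY Y hY Y hY hR (hEq.refl Y)
  by_cases hXeq : X = plusN X Y
  · exact ⟨Y, hY, _, hSplus X hX Y hY, hYS, leD_plusN_right X Y,
      fun hYeq => hne (hXeq.trans hYeq.symm)⟩
  · exact ⟨X, hX, _, hSplus X hX Y hY, hXS, leD_plusN_left X Y, hXeq⟩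

theorem exists_rel_leD_fst_ne {α : Type*} {S : Set (DPair α)} {R : DPair α → DPair α → Prop}
    (hSneg : ∀ X ∈ S, dsNeg X ∈ S) (hEq : Equivalence R)
    (hRneg : ∀ X ∈ S, ∀ Y ∈ S, R X Y → R (dsNeg X) (dsNeg Y))
    {P Q : DPair α} (hP : P ∈ S) (hQ : Q ∈ S) (hR : R P Q) (hle : leD P Q) (hne : P ≠ Q) :
    ∃ P ∈ S, ∃ Q ∈ S, R P Q ∧ leD P Q ∧ P.1 ≠ Q.1 := by
  by_cases hfst : P.1 = Q.1
  · exact ⟨dsNeg Q, hSneg Q hQ, dsNeg P, hSneg P hP, hEq.symm (hRneg P hP Q hQ hR),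
      leD_dsNeg hle, fun hsnd => hne (Prod.ext hfst hsnd.symm)⟩
  · exact ⟨P, hP, Q, hQ, hR, hle, hfst⟩

theorem stmt14 {N A : Type*} (S : Set (DPair (N → A)))
    (hS : ∀ X ∈ S, DoubleSuit X) (hOm : dsOmega ∈ S)
    (hSneg : ∀ X ∈ S, dsNeg X ∈ S)
    (hSplus : ∀ X ∈ S, ∀ Y ∈ S, plusN X Y ∈ S)
    (R : DPair (N → A) → DPair (N → A) → Prop) (hEq : Equivalence R)
    (hRneg : ∀ X ∈ S, ∀ Y ∈ S, R X Y → R (dsNeg X) (dsNeg Y))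
    (hRplus : ∀ X ∈ S, ∀ Y ∈ S, ∀ X' ∈ S, ∀ Y' ∈ S,
      R X X' → R Y Y' → R (plusN X Y) (plusN X' Y'))
    (hnontriv : ∃ X ∈ S, ∃ Y ∈ S, R X Y ∧ X ≠ Y) :
    ∃ X ∈ S, ∃ Y ∈ S, R X Y ∧ leD dsOmega X ∧ leD X Y ∧ X ≠ Y := by
  obtain ⟨X, hX, Y, hY, hR, hne⟩ := hnontriv
  obtain ⟨P, hP, Q, hQ, hR, hle, hne⟩ := exists_rel_leD_ne hSplus hEq hRplus hX hY hR hne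
  obtain ⟨P, hP, Q, hQ, hR, hle, hne⟩ := exists_rel_leD_fst_ne hSneg hEq hRneg hP hQ hR hle hne
  refine ⟨plusN dsOmega P, hSplus _ hOm P hP, plusN dsOmega Q, hSplus _ hOm Q hQ,
    hRplus _ hOm P hP _ hOm Q hQ (hEq.refl _) hR, leD_plusN_left _ _,
    leD_plusN_plusN_left _ hle, fun h => hne ?_⟩
  rw [← fst_plusN_dsOmega (hS P hP).1.empty_mem, ← fst_plusN_dsOmega (hS Q hQ).1.empty_mem, h]
end

section
/- Let ≅ be a congruence on a double-suited IFG_N-algebra (compatible with +_∅). If X ≅ Y and the order of X (least n with the n-fold +_∅ sum of X equal to 1) is strictly less than the order of Y, then ≅ is the total congruence. -/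
open Set

/-! The `n`-fold sum of `X` is 1 while that of `Y` is not, and the congruence relates
the two `n`-fold sums, so it relates 1 to a double suit different from 1. -/

namespace DoubleSuit

variable {α : Type*} {X Y : DPair α}

theorem empty_mem (hX : DoubleSuit X) : ∅ ∈ X.1 ∧ ∅ ∈ X.2 := by
  have h : (∅ : Set α) ∈ X.1 ∩ X.2 := hX.2.2 ▸ rfl
  exact h

theorem eq_empty_of_mem_fst_of_subset_mem_snd (hX : DoubleSuit X) {V W : Set α}
    (hV : V ∈ X.1) (hW : W ∈ X.2) (hVW : V ⊆ W) : V = ∅ := by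
  have h : V ∈ X.1 ∩ X.2 := ⟨hV, hX.2.1.2 W hW V hVW⟩
  rwa [hX.2.2] at h

theorem plusE (hX : DoubleSuit X) (hY : DoubleSuit Y) : DoubleSuit (plusE X Y) := by
  have hempty : (∅ : Set α) ∈ (_root_.plusE X Y).1 :=
    ⟨∅, hX.empty_mem.1, ∅, hY.empty_mem.1, by simp, by simp⟩
  refine ⟨⟨⟨∅, hempty⟩, ?_⟩, ⟨⟨∅, hX.empty_mem.2, hY.empty_mem.2⟩, ?_⟩, ?_⟩
  · rintro _ ⟨V₁, hV₁, V₂, hV₂, rfl, hdisj⟩ V hV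
    refine ⟨V ∩ V₁, hX.1.2 _ hV₁ _ inter_subset_right,
      V ∩ V₂, hY.1.2 _ hV₂ _ inter_subset_right, ?_, ?_⟩
    · rw [← inter_union_distrib_left, inter_eq_left.mpr hV]
    · rw [inter_inter_inter_comm, hdisj, inter_empty]
  · rintro W ⟨hWX, hWY⟩ W' hW'
    exact ⟨hX.2.1.2 _ hWX _ hW', hY.2.1.2 _ hWY _ hW'⟩
  · refine Subset.antisymm ?_
      (singleton_subset_iff.mpr ⟨hempty, hX.empty_mem.2, hY.empty_mem.2⟩)
    rintro _ ⟨⟨V₁, hV₁, V₂, hV₂, rfl, -⟩, hX₂, hY₂⟩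
    rw [hX.eq_empty_of_mem_fst_of_subset_mem_snd hV₁ hX₂ subset_union_left,
      hY.eq_empty_of_mem_fst_of_subset_mem_snd hV₂ hY₂ subset_union_right, union_empty]
    rfl

theorem nsum (hX : DoubleSuit X) (n : ℕ) : DoubleSuit (nsum X n) := by
  induction n with
  | zero => exact hX
  | succ n ih => exact hX.plusE ih

end DoubleSuit

section ordOf

variable {α : Type*} {X : DPair α}

theorem ordOf_le_of_nsum_eq_dsOne {n : ℕ} (h : nsum X n = dsOne) : ordOf X ≤ n + 1 :=
  sInf_le ⟨n, rfl, h⟩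

theorem exists_nsum_eq_dsOne_of_ordOf_ne_top (h : ordOf X ≠ ⊤) :
    ∃ n : ℕ, ordOf X = n + 1 ∧ nsum X n = dsOne := by
  have hne : {m : ℕ∞ | ∃ n : ℕ, m = n + 1 ∧ nsum X n = dsOne}.Nonempty :=
    nonempty_iff_ne_empty.mpr fun hempty => h (by rw [ordOf, hempty, sInf_empty])
  exact csInf_mem hne

end ordOf

theorem nsum_rel {α : Type*} {R : DPair α → DPair α → Prop}
    (hRplus : ∀ X Y X' Y' : DPair α, DoubleSuit X → DoubleSuit Y →
      DoubleSuit X' → DoubleSuit Y' → R X X' → R Y Y' → R (plusE X Y) (plusE X' Y'))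
    {X Y : DPair α} (hX : DoubleSuit X) (hY : DoubleSuit Y) (hR : R X Y) (n : ℕ) :
    R (nsum X n) (nsum Y n) := by
  induction n with
  | zero => exact hR
  | succ n ih => exact hRplus _ _ _ _ hX (hX.nsum n) hY (hY.nsum n) hR ih

theorem stmt16 {N A : Type*} (R : DPair (N → A) → DPair (N → A) → Prop)
    (hEq : Equivalence R)
    (hRplus : ∀ X Y X' Y' : DPair (N → A), DoubleSuit X → DoubleSuit Y →
      DoubleSuit X' → DoubleSuit Y' →
      R X X' → R Y Y' → R (plusE X Y) (plusE X' Y'))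
    (htot : ∀ X : DPair (N → A), DoubleSuit X → R X dsOne → X ≠ dsOne →
      ∀ Z W : DPair (N → A), DoubleSuit Z → DoubleSuit W → R Z W)
    (X Y : DPair (N → A)) (hX : DoubleSuit X) (hY : DoubleSuit Y)
    (hR : R X Y) (hord : ordOf X < ordOf Y) :
    ∀ Z W : DPair (N → A), DoubleSuit Z → DoubleSuit W → R Z W := by
  obtain ⟨n, hXord, hXn⟩ := exists_nsum_eq_dsOne_of_ordOf_ne_top (hord.trans_le le_top).ne
  have hYn : nsum Y n ≠ dsOne := fun hYn =>
    (ordOf_le_of_nsum_eq_dsOne hYn).not_gt (hXord ▸ hord)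
  have hRn : R (nsum Y n) dsOne := hEq.symm (hXn ▸ nsum_rel hRplus hX hY hR n)
  exact htot _ (hY.nsum n) hRn hYn
end

section
/- Over A = {0,1,2} with teams being subsets of A, let A₁ = (P({0,1}), {∅}) and B₁ = (P({0}) ∪ P({1}), {∅}), and let S = {0, ¬A₁, ¬B₁, Ω, B₁, A₁, 1}. The equivalence relation identifying exactly A₁ with B₁ and ¬A₁ with ¬B₁ (and nothing else) is a nontrivial, non-total congruence on S with respect to the operations ¬, +_∅, and +_{full}. In particular, this 7-element algebra is not simple. -/
open Set

/-- `A₁ = (P({0,1}), {∅})` over `A = {0,1,2}`. -/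
def A₁ : DPair (Fin 3) := (𝒫 ({0, 1} : Set (Fin 3)), {∅})

/-- `B₁ = (P({0}) ∪ P({1}), {∅})` over `A = {0,1,2}`. -/
def B₁ : DPair (Fin 3) := (𝒫 ({0} : Set (Fin 3)) ∪ 𝒫 ({1} : Set (Fin 3)), {∅})

/-- The 7-element subuniverse `S = {0, ¬A₁, ¬B₁, Ω, B₁, A₁, 1}`. -/
def S17 : Set (DPair (Fin 3)) :=
  {dsZero, dsNeg A₁, dsNeg B₁, dsOmega, B₁, A₁, dsOne}

/-- The relation identifying exactly `A₁` with `B₁` and `¬A₁` with `¬B₁`. -/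
def R17 (X Y : DPair (Fin 3)) : Prop :=
  X = Y ∨ (X = A₁ ∧ Y = B₁) ∨ (X = B₁ ∧ Y = A₁) ∨
    (X = dsNeg A₁ ∧ Y = dsNeg B₁) ∨ (X = dsNeg B₁ ∧ Y = dsNeg A₁)

/-!
Every member of `S` has both coordinates in the chain
`{∅} ⊂ P({0}) ∪ P({1}) ⊂ P({0,1}) ⊂ P(A)` and at least one of them equal to `{∅}`, so indexing the
chain by levels `0 < 1 < 2 < 3` codes `S` by seven pairs of levels. On the chain `∪` and `∩` are
`max` and `min`, and `+_∅` is the addition of levels in which `0` is neutral, `3` is absorbing and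
any two of `1, 2` add up to `2`; the key instance is `B₁⁺ +_∅ B₁⁺ = A₁⁺`, obtained by splitting a
team `V ⊆ {0,1}` into `V ∩ {0}` and `V ∩ {1}`. Hence all three operations act on codes by level
arithmetic, and closure of `S` is a finite check. On `S`, `R` is the kernel of the map collapsing
level `1` onto level `2` in both coordinates; this map commutes with `max`, `min` and the addition
of levels, so `R` is a congruence.
-/

section TeamSum

variable {α : Type*}

def teamSum (X Y : Set (Set α)) : Set (Set α) :=
  {V | ∃ V₁ ∈ X, ∃ V₂ ∈ Y, V = V₁ ∪ V₂ ∧ V₁ ∩ V₂ = ∅}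

theorem plusE_eq_teamSum (X Y : DPair α) : plusE X Y = (teamSum X.1 Y.1, X.2 ∩ Y.2) := rfl

theorem teamSum_comm (X Y : Set (Set α)) : teamSum X Y = teamSum Y X := by
  ext V
  constructor <;> rintro ⟨V₁, h₁, V₂, h₂, rfl, hd⟩ <;>
    exact ⟨V₂, h₂, V₁, h₁, union_comm _ _, by rwa [inter_comm]⟩

theorem teamSum_mono {X X' Y Y' : Set (Set α)} (hX : X ⊆ X') (hY : Y ⊆ Y') :
    teamSum X Y ⊆ teamSum X' Y' := by
  rintro V ⟨V₁, h₁, V₂, h₂, hV, hd⟩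
  exact ⟨V₁, hX h₁, V₂, hY h₂, hV, hd⟩

theorem subset_teamSum_left {X Y : Set (Set α)} (hY : ∅ ∈ Y) : X ⊆ teamSum X Y :=
  fun V hV => ⟨V, hV, ∅, hY, (union_empty V).symm, inter_empty V⟩

theorem subset_teamSum_right {X Y : Set (Set α)} (hX : ∅ ∈ X) : Y ⊆ teamSum X Y :=
  teamSum_comm Y X ▸ subset_teamSum_left hX

theorem teamSum_singleton_empty_left (X : Set (Set α)) : teamSum {∅} X = X := by
  refine Subset.antisymm ?_ (subset_teamSum_right rfl)
  rintro V ⟨V₁, rfl, V₂, h₂, rfl, -⟩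
  rwa [empty_union]

theorem teamSum_singleton_empty_right (X : Set (Set α)) : teamSum X {∅} = X := by
  rw [teamSum_comm, teamSum_singleton_empty_left]

theorem teamSum_univ_right {X : Set (Set α)} (hX : ∅ ∈ X) : teamSum X univ = univ :=
  eq_univ_of_univ_subset (subset_teamSum_right hX)

theorem teamSum_univ_left {X : Set (Set α)} (hX : ∅ ∈ X) : teamSum univ X = univ := by
  rw [teamSum_comm, teamSum_univ_right hX]

theorem teamSum_subset_powerset {X Y : Set (Set α)} {s : Set α} (hX : X ⊆ 𝒫 s)
    (hY : Y ⊆ 𝒫 s) : teamSum X Y ⊆ 𝒫 s := by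
  rintro V ⟨V₁, h₁, V₂, h₂, rfl, -⟩
  exact union_subset (hX h₁) (hY h₂)

theorem teamSum_powerset_of_disjoint {s t : Set α} (h : Disjoint s t) :
    teamSum (𝒫 s) (𝒫 t) = 𝒫 (s ∪ t) := by
  refine Subset.antisymm ?_ fun V hV => ?_
  · exact teamSum_subset_powerset (fun V hV => hV.trans subset_union_left)
      (fun V hV => hV.trans subset_union_right)
  · refine ⟨V ∩ s, inter_subset_right, V ∩ t, inter_subset_right, ?_, ?_⟩
    · rw [← inter_union_distrib_left, inter_eq_self_of_subset_left hV]
    · exact (h.mono inter_subset_right inter_subset_right).eq_bot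

end TeamSum

namespace S17

def levelSet : Fin 4 → Set (Set (Fin 3)) :=
  ![{∅}, 𝒫 {0} ∪ 𝒫 {1}, 𝒫 {0, 1}, univ]

theorem levelSet_strictMono : StrictMono levelSet := by
  refine Fin.strictMono_iff_lt_succ.2 fun i => ?_
  fin_cases i <;> refine (ssubset_iff_of_subset (by simp [levelSet])).2 ?_
  exacts [⟨{0}, by simp [levelSet]⟩, ⟨{0, 1}, by simp [levelSet]⟩, ⟨{2}, by simp [levelSet]⟩]

theorem empty_mem_levelSet (i : Fin 4) : ∅ ∈ levelSet i :=
  levelSet_strictMono.monotone (Fin.zero_le i) rfl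

theorem levelSet_max (i j : Fin 4) : levelSet (max i j) = levelSet i ∪ levelSet j := by
  rcases le_total i j with h | h
  · rw [max_eq_right h, union_eq_right.2 (levelSet_strictMono.monotone h)]
  · rw [max_eq_left h, union_eq_left.2 (levelSet_strictMono.monotone h)]

theorem levelSet_min (i j : Fin 4) : levelSet (min i j) = levelSet i ∩ levelSet j := by
  rcases le_total i j with h | h
  · rw [min_eq_left h, inter_eq_left.2 (levelSet_strictMono.monotone h)]
  · rw [min_eq_right h, inter_eq_right.2 (levelSet_strictMono.monotone h)]

theorem teamSum_levelSet_of_mem_Icc {i j : Fin 4} (hi : i ∈ Icc 1 2) (hj : j ∈ Icc 1 2) :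
    teamSum (levelSet i) (levelSet j) = levelSet 2 := by
  have mono := levelSet_strictMono.monotone
  refine Subset.antisymm (teamSum_subset_powerset (s := {0, 1}) (mono hi.2) (mono hj.2)) ?_
  calc levelSet 2 = teamSum (𝒫 {0}) (𝒫 {1}) := by
        rw [teamSum_powerset_of_disjoint (by simp)]; rfl
    _ ⊆ teamSum (levelSet 1) (levelSet 1) := teamSum_mono subset_union_left subset_union_right
    _ ⊆ teamSum (levelSet i) (levelSet j) := teamSum_mono (mono hi.1) (mono hj.1)

def levelAdd (i j : Fin 4) : Fin 4 :=
  if i = 0 then j else if j = 0 then i else max (max i j) 2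

theorem teamSum_levelSet (i j : Fin 4) :
    teamSum (levelSet i) (levelSet j) = levelSet (levelAdd i j) := by
  have h₀ : levelSet 0 = {∅} := rfl
  have h₃ : levelSet 3 = univ := rfl
  fin_cases i <;> fin_cases j <;>
    simp [levelAdd, h₀, h₃, teamSum_singleton_empty_left, teamSum_singleton_empty_right,
      teamSum_univ_left, teamSum_univ_right, empty_mem_levelSet, teamSum_levelSet_of_mem_Icc]

def code : Fin 4 × Fin 4 → DPair (Fin 3) := Prod.map levelSet levelSet

theorem code_injective : Function.Injective code :=
  levelSet_strictMono.injective.prodMap levelSet_strictMono.injective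

theorem A₁_eq_code : A₁ = code (2, 0) := rfl
theorem B₁_eq_code : B₁ = code (1, 0) := rfl
theorem dsNeg_code (p : Fin 4 × Fin 4) : dsNeg (code p) = code p.swap := rfl

def pairOp (f : Fin 4 → Fin 4 → Fin 4) (p q : Fin 4 × Fin 4) : Fin 4 × Fin 4 :=
  (f p.1 q.1, min p.2 q.2)

theorem plusN_code (p q : Fin 4 × Fin 4) : plusN (code p) (code q) = code (pairOp max p q) := by
  simp only [plusN, code, pairOp, Prod.map, levelSet_max, levelSet_min]

theorem plusE_code (p q : Fin 4 × Fin 4) :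
    plusE (code p) (code q) = code (pairOp levelAdd p q) := by
  simp only [plusE_eq_teamSum, code, pairOp, Prod.map, teamSum_levelSet, levelSet_min]

def sCodes : Finset (Fin 4 × Fin 4) := {(0, 3), (0, 2), (0, 1), (0, 0), (1, 0), (2, 0), (3, 0)}

theorem S17_eq_image : S17 = code '' sCodes := by
  simp only [sCodes, Finset.coe_insert, Finset.coe_singleton, image_insert_eq, image_singleton]
  rfl

theorem R17_code_iff (p q : Fin 4 × Fin 4) :
    R17 (code p) (code q) ↔ p = q ∨ (p = (2, 0) ∧ q = (1, 0)) ∨ (p = (1, 0) ∧ q = (2, 0)) ∨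
      (p = (0, 2) ∧ q = (0, 1)) ∨ (p = (0, 1) ∧ q = (0, 2)) := by
  simp only [R17, A₁_eq_code, B₁_eq_code, dsNeg_code, code_injective.eq_iff, Prod.swap_prod_mk]

theorem R17_trans {X Y Z : DPair (Fin 3)} (h₁ : R17 X Y) (h₂ : R17 Y Z) : R17 X Z := by
  rcases h₁ with rfl | ⟨rfl, rfl⟩ | ⟨rfl, rfl⟩ | ⟨rfl, rfl⟩ | ⟨rfl, rfl⟩
  · exact h₂
  all_goals
    rcases h₂ with rfl | ⟨h, rfl⟩ | ⟨h, rfl⟩ | ⟨h, rfl⟩ | ⟨h, rfl⟩ <;>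
    simp_all [R17, A₁_eq_code, B₁_eq_code, dsNeg_code, code_injective.eq_iff]

theorem R17_equivalence : Equivalence R17 where
  refl _ := Or.inl rfl
  symm h := by rcases h with rfl | ⟨rfl, rfl⟩ | ⟨rfl, rfl⟩ | ⟨rfl, rfl⟩ | ⟨rfl, rfl⟩ <;> simp [R17]
  trans := R17_trans

theorem R17_dsNeg {X Y : DPair (Fin 3)} (h : R17 X Y) : R17 (dsNeg X) (dsNeg Y) := by
  rcases h with rfl | ⟨rfl, rfl⟩ | ⟨rfl, rfl⟩ | ⟨rfl, rfl⟩ | ⟨rfl, rfl⟩ <;> simp [R17, dsNeg]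

theorem swap_mem_sCodes : ∀ p ∈ sCodes, p.swap ∈ sCodes := by decide

theorem pairOp_levelAdd_mem_sCodes : ∀ p ∈ sCodes, ∀ q ∈ sCodes, pairOp levelAdd p q ∈ sCodes := by
  decide

theorem pairOp_max_mem_sCodes : ∀ p ∈ sCodes, ∀ q ∈ sCodes, pairOp max p q ∈ sCodes := by
  decide

def collapseLevel (i : Fin 4) : Fin 4 := if i = 1 then 2 else i

theorem collapseLevel_levelAdd (i j : Fin 4) :
    collapseLevel (levelAdd i j) = levelAdd (collapseLevel i) (collapseLevel j) := by
  revert i j; decide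

theorem collapseLevel_max (i j : Fin 4) :
    collapseLevel (max i j) = max (collapseLevel i) (collapseLevel j) := by
  revert i j; decide

theorem collapseLevel_min (i j : Fin 4) :
    collapseLevel (min i j) = min (collapseLevel i) (collapseLevel j) := by
  revert i j; decide

def collapse (p : Fin 4 × Fin 4) : Fin 4 × Fin 4 := Prod.map collapseLevel collapseLevel p

theorem R17_code_iff_collapse (p q : Fin 4 × Fin 4) (hp : p ∈ sCodes) (hq : q ∈ sCodes) :
    R17 (code p) (code q) ↔ collapse p = collapse q := by
  rw [R17_code_iff]
  revert q
  revert p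
  decide

theorem R17_code_pairOp {f : Fin 4 → Fin 4 → Fin 4}
    (hf : ∀ i j, collapseLevel (f i j) = f (collapseLevel i) (collapseLevel j))
    (hS : ∀ p ∈ sCodes, ∀ q ∈ sCodes, pairOp f p q ∈ sCodes) {p q p' q' : Fin 4 × Fin 4}
    (hp : p ∈ sCodes) (hq : q ∈ sCodes) (hp' : p' ∈ sCodes) (hq' : q' ∈ sCodes)
    (h₁ : R17 (code p) (code p')) (h₂ : R17 (code q) (code q')) :
    R17 (code (pairOp f p q)) (code (pairOp f p' q')) := by
  have hom : ∀ p q, collapse (pairOp f p q) = pairOp f (collapse p) (collapse q) := fun p q =>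
    Prod.ext (hf _ _) (collapseLevel_min _ _)
  rw [R17_code_iff_collapse p p' hp hp'] at h₁
  rw [R17_code_iff_collapse q q' hq hq'] at h₂
  rw [R17_code_iff_collapse _ _ (hS p hp q hq) (hS p' hp' q' hq'), hom, hom, h₁, h₂]

end S17

open S17

theorem stmt17 :
    -- S is closed under the operations
    (∀ X ∈ S17, dsNeg X ∈ S17) ∧
    (∀ X ∈ S17, ∀ Y ∈ S17, plusE X Y ∈ S17 ∧ plusN X Y ∈ S17) ∧
    -- R is an equivalence relation
    Equivalence R17 ∧
    -- R is a congruence on S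
    (∀ X ∈ S17, ∀ Y ∈ S17, R17 X Y → R17 (dsNeg X) (dsNeg Y)) ∧
    (∀ X ∈ S17, ∀ Y ∈ S17, ∀ X' ∈ S17, ∀ Y' ∈ S17, R17 X X' → R17 Y Y' →
      R17 (plusE X Y) (plusE X' Y') ∧ R17 (plusN X Y) (plusN X' Y')) ∧
    -- R is nontrivial and non-total
    (R17 A₁ B₁ ∧ A₁ ≠ B₁) ∧ ¬ R17 dsZero dsOne := by
  rw [S17_eq_image]
  refine ⟨?_, ?_, R17_equivalence, fun _ _ _ _ => R17_dsNeg, ?_,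
    ⟨Or.inr (Or.inl ⟨rfl, rfl⟩), code_injective.ne (a₁ := (2, 0)) (a₂ := (1, 0)) (by decide)⟩,
    (R17_code_iff (0, 3) (3, 0)).not.2 (by decide)⟩
  · rintro _ ⟨p, hp, rfl⟩
    exact ⟨p.swap, swap_mem_sCodes p hp, rfl⟩
  · rintro _ ⟨p, hp, rfl⟩ _ ⟨q, hq, rfl⟩
    rw [plusE_code, plusN_code]
    exact ⟨mem_image_of_mem _ (pairOp_levelAdd_mem_sCodes p hp q hq),
      mem_image_of_mem _ (pairOp_max_mem_sCodes p hp q hq)⟩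
  · rintro _ ⟨p, hp, rfl⟩ _ ⟨q, hq, rfl⟩ _ ⟨p', hp', rfl⟩ _ ⟨q', hq', rfl⟩ h₁ h₂
    rw [plusE_code, plusE_code, plusN_code, plusN_code]
    exact ⟨R17_code_pairOp collapseLevel_levelAdd pairOp_levelAdd_mem_sCodes hp hq hp' hq' h₁ h₂,
      R17_code_pairOp collapseLevel_max pairOp_max_mem_sCodes hp hq hp' hq' h₁ h₂⟩
end

section
/- For double suits X, Y over N → A: the full team N → A belongs to ((¬X +_∅ Y) ·_∅ (X +_∅ ¬Y))⁺ if and only if X = Y and X is perfect, i.e., there is a team V with X = (P(V), P((N→A) \ V)). -/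
open Set

/-!
The full team lies in `(¬X +_∅ Y)⁺` iff some `W ∈ X⁻` has `Wᶜ ∈ Y⁺`, and in `(X +_∅ ¬Y)⁺` iff
some `U ∈ X⁺` has `Uᶜ ∈ Y⁻`. Since positive and negative teams of a double suit are disjoint, this
squeezes `U = Wᶜ`; a double suit containing `U` positively and `Uᶜ` negatively is `(𝒫 U, 𝒫 Uᶜ)`.
-/

namespace DoubleSuit

variable {α : Type*} {X : DPair α}

/-- A common point `s` of `S ∈ X⁺` and `T ∈ X⁻` would put `{s} ≠ ∅` in `X⁺ ∩ X⁻ = {∅}`. -/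
theorem disjoint_of_mem (hX : DoubleSuit X) {S T : Set α} (hS : S ∈ X.1) (hT : T ∈ X.2) :
    Disjoint S T := by
  refine Set.disjoint_left.mpr fun s hsS hsT => ?_
  have hs : ({s} : Set α) ∈ X.1 ∩ X.2 :=
    ⟨hX.1.2 S hS {s} (singleton_subset_iff.mpr hsS),
      hX.2.1.2 T hT {s} (singleton_subset_iff.mpr hsT)⟩
  rw [hX.2.2] at hs
  exact singleton_ne_empty s hs

theorem eq_powerset_of_mem_of_compl_mem (hX : DoubleSuit X) {U : Set α} (hU : U ∈ X.1)
    (hUc : Uᶜ ∈ X.2) : X = (𝒫 U, 𝒫 Uᶜ) := by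
  refine Prod.ext (Set.ext fun S => ⟨fun hS => ?_, hX.1.2 U hU S⟩)
    (Set.ext fun S => ⟨fun hS => ?_, hX.2.1.2 Uᶜ hUc S⟩)
  · exact disjoint_compl_right_iff_subset.mp (hX.disjoint_of_mem hS hUc)
  · exact subset_compl_iff_disjoint_left.mpr (hX.disjoint_of_mem hU hS)

end DoubleSuit

theorem univ_mem_plusE_fst_iff {α : Type*} {X Y : DPair α} :
    univ ∈ (plusE X Y).1 ↔ ∃ V ∈ X.1, Vᶜ ∈ Y.1 := by
  constructor
  · rintro ⟨V₁, hV₁, V₂, hV₂, hcover, hdisj⟩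
    have hcompl : IsCompl V₁ V₂ :=
      ⟨disjoint_iff_inter_eq_empty.mpr hdisj, codisjoint_iff.mpr hcover.symm⟩
    exact ⟨V₁, hV₁, hcompl.compl_eq ▸ hV₂⟩
  · rintro ⟨V, hV, hVc⟩
    exact ⟨V, hV, Vᶜ, hVc, (union_compl_self V).symm, inter_compl_self V⟩

theorem stmt19 {N A : Type*} (X Y : DPair (N → A))
    (hX : DoubleSuit X) (hY : DoubleSuit Y) :
    (Set.univ : Set (N → A)) ∈ (dotE (plusE (dsNeg X) Y) (plusE X (dsNeg Y))).1 ↔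
      (X = Y ∧ ∃ V : Set (N → A), X = (𝒫 V, 𝒫 Vᶜ)) := by
  simp only [dotE, mem_inter_iff, univ_mem_plusE_fst_iff, dsNeg]
  constructor
  · rintro ⟨⟨W, hW, hWc⟩, ⟨U, hU, hUc⟩⟩
    have hWU : Uᶜ = W := compl_eq_comm.mpr <|
      (disjoint_compl_right_iff_subset.mp (hY.disjoint_of_mem hWc hUc)).antisymm
        (subset_compl_iff_disjoint_right.mpr (hX.disjoint_of_mem hU hW))
    subst hWU
    rw [compl_compl] at hWc
    have hXU := hX.eq_powerset_of_mem_of_compl_mem hU hW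
    exact ⟨hXU.trans (hY.eq_powerset_of_mem_of_compl_mem hWc hUc).symm, U, hXU⟩
  · rintro ⟨rfl, V, rfl⟩
    exact ⟨⟨Vᶜ, mem_powerset subset_rfl, (compl_compl V).subset⟩,
      ⟨V, mem_powerset subset_rfl, mem_powerset subset_rfl⟩⟩
end
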